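/- For any given density ρ₀ and any momentum components j_x, j_y, the vector m₀ = (ρ₀, j_x, j_y, α λ² ρ₀, 0, 0, −λ² j_x, −λ² j_y, β λ⁴ ρ₀)ᵗ satisfies the order-zero fluid anti bounce back boundary equation K m₀ = M ξ₀, where ξ₀ is the boundary data vector (0,0,(4−α−2β)ρ₀/18,0,0,(4+2α+β)ρ₀/18,(4+2α+β)ρ₀/18,0,0)ᵗ. -/

import Mathlib

open Matrix

noncomputable section

/-- D2Q9 moment matrix (equation 5). -/
def Md (l : ℝ) : Matrix (Fin 9) (Fin 9) ℝ :=
  !![1, 1, 1, 1, 1, 1, 1, 1, 1;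
     0, l, 0, -l, 0, l, -l, -l, l;
     0, 0, l, 0, -l, l, l, -l, -l;
     -4*l^2, -l^2, -l^2, -l^2, -l^2, 2*l^2, 2*l^2, 2*l^2, 2*l^2;
     0, l^2, -l^2, l^2, -l^2, 0, 0, 0, 0;
     0, 0, 0, 0, 0, l^2, -l^2, l^2, -l^2;
     0, -2*l^3, 0, 2*l^3, 0, l^3, -l^3, -l^3, l^3;
     0, 0, -2*l^3, 0, 2*l^3, l^3, l^3, -l^3, -l^3;
     4*l^4, -2*l^4, -2*l^4, -2*l^4, -2*l^4, l^4, l^4, l^4, l^4]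

/-- Fluid collision matrix (equation 14). -/
def Cfl (l a b se sx sq sd : ℝ) : Matrix (Fin 9) (Fin 9) ℝ :=
  !![1, 0, 0, 0, 0, 0, 0, 0, 0;
     0, 1, 0, 0, 0, 0, 0, 0, 0;
     0, 0, 1, 0, 0, 0, 0, 0, 0;
     a*se*l^2, 0, 0, 1 - se, 0, 0, 0, 0, 0;
     0, 0, 0, 0, 1 - sx, 0, 0, 0, 0;
     0, 0, 0, 0, 0, 1 - sx, 0, 0, 0;
     0, -sq*l^2, 0, 0, 0, 0, 1 - sq, 0, 0;
     0, 0, -sq*l^2, 0, 0, 0, 0, 1 - sq, 0;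
     b*sd*l^4, 0, 0, 0, 0, 0, 0, 0, 1 - sd]

/-- Matrix U (equation 21): diagonal 0/1 with ones at positions 0,1,3,4,7,8. -/
def Ub : Matrix (Fin 9) (Fin 9) ℝ :=
  !![1, 0, 0, 0, 0, 0, 0, 0, 0;
     0, 1, 0, 0, 0, 0, 0, 0, 0;
     0, 0, 0, 0, 0, 0, 0, 0, 0;
     0, 0, 0, 1, 0, 0, 0, 0, 0;
     0, 0, 0, 0, 1, 0, 0, 0, 0;
     0, 0, 0, 0, 0, 0, 0, 0, 0;
     0, 0, 0, 0, 0, 0, 0, 0, 0;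
     0, 0, 0, 0, 0, 0, 0, 1, 0;
     0, 0, 0, 0, 0, 0, 0, 0, 1]

/-- Anti bounce back interaction matrix T (equation 22). -/
def Tabb : Matrix (Fin 9) (Fin 9) ℝ :=
  !![0, 0, 0, 0, 0, 0, 0, 0, 0;
     0, 0, 0, 0, 0, 0, 0, 0, 0;
     0, 0, 0, 0, -1, 0, 0, 0, 0;
     0, 0, 0, 0, 0, 0, 0, 0, 0;
     0, 0, 0, 0, 0, 0, 0, 0, 0;
     0, 0, 0, 0, 0, 0, 0, -1, 0;
     0, 0, 0, 0, 0, 0, 0, 0, -1;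
     0, 0, 0, 0, 0, 0, 0, 0, 0;
     0, 0, 0, 0, 0, 0, 0, 0, 0]

/-- Fluid anti bounce back boundary matrix K = I - M (T + U) M⁻¹ C (equation 32). -/
def Kfl (l a b se sx sq sd : ℝ) : Matrix (Fin 9) (Fin 9) ℝ :=
  1 - Md l * (Tabb + Ub) * (Md l)⁻¹ * Cfl l a b se sx sq sd

/-! The moment vector m₀ is fixed by the collision matrix C and is the moment vector M f₀ of an
explicit equilibrium population f₀. Hence K m₀ = m₀ - M (T + U) f₀ = M ((1 - T - U) f₀), and
(1 - T - U) f₀ keeps only the sums f₂ + f₄, f₅ + f₇, f₆ + f₈ of opposite populations, in which the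
momentum terms cancel and what is left is ξ₀. The inverse of M is never computed: its rows are
orthogonal, so M Mᵀ is diagonal with nonzero entries and det M ≠ 0. -/

theorem Matrix.one_sub_conj_mul_mulVec {n R : Type*} [Fintype n] [DecidableEq n] [CommRing R]
    {M P C : Matrix n n R} {m f : n → R} (hM : IsUnit M.det) (hC : C *ᵥ m = m) (hf : M *ᵥ f = m) :
    (1 - M * P * M⁻¹ * C) *ᵥ m = M *ᵥ ((1 - P) *ᵥ f) := by
  have hinv : M⁻¹ *ᵥ m = f := by rw [← hf, mulVec_mulVec, nonsing_inv_mul _ hM, one_mulVec]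
  rw [sub_mulVec, one_mulVec, ← mulVec_mulVec, hC, ← mulVec_mulVec, hinv, ← mulVec_mulVec,
    sub_mulVec, one_mulVec, mulVec_sub, hf]

theorem Md_mul_transpose (l : ℝ) :
    Md l * (Md l)ᵀ =
      diagonal ![9, 6*l^2, 6*l^2, 36*l^4, 4*l^4, 4*l^4, 12*l^6, 12*l^6, 36*l^8] := by
  ext i j
  fin_cases i <;> fin_cases j <;> simp [Md, mul_apply, Fin.sum_univ_succ] <;> ring

theorem isUnit_det_Md {l : ℝ} (hl : l ≠ 0) : IsUnit (Md l).det := by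
  have h : (Md l * (Md l)ᵀ).det ≠ 0 := by
    rw [Md_mul_transpose, det_diagonal]
    simp [Fin.prod_univ_succ, hl]
  rw [det_mul, det_transpose] at h
  exact isUnit_iff_ne_zero.mpr (left_ne_zero_of_mul h)

def equilibriumMoments (l a b ρ₀ jx jy : ℝ) : Fin 9 → ℝ :=
  ![ρ₀, jx, jy, a*l^2*ρ₀, 0, 0, -l^2*jx, -l^2*jy, b*l^4*ρ₀]

def equilibriumDistribution (l a b ρ₀ jx jy : ℝ) : Fin 9 → ℝ :=
  let c := (4 - a - 2*b)*ρ₀/36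
  let d := (4 + 2*a + b)*ρ₀/36
  ![(1 - a + b)*ρ₀/9,
    c + jx/(3*l), c + jy/(3*l), c - jx/(3*l), c - jy/(3*l),
    d + (jx + jy)/(12*l), d + (jy - jx)/(12*l), d - (jx + jy)/(12*l), d + (jx - jy)/(12*l)]

theorem Cfl_mulVec_equilibriumMoments (l a b se sx sq sd ρ₀ jx jy : ℝ) :
    Cfl l a b se sx sq sd *ᵥ equilibriumMoments l a b ρ₀ jx jy =
      equilibriumMoments l a b ρ₀ jx jy := by
  ext i
  fin_cases i <;> simp [Cfl, equilibriumMoments, mulVec, dotProduct, Fin.sum_univ_succ] <;> ring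

theorem Md_mulVec_equilibriumDistribution {l : ℝ} (hl : l ≠ 0) (a b ρ₀ jx jy : ℝ) :
    Md l *ᵥ equilibriumDistribution l a b ρ₀ jx jy = equilibriumMoments l a b ρ₀ jx jy := by
  ext i
  fin_cases i <;>
    simp [Md, equilibriumDistribution, equilibriumMoments, mulVec, dotProduct, Fin.sum_univ_succ] <;>
    field_simp <;> ring

theorem one_sub_Tabb_add_Ub_mulVec_equilibriumDistribution (l a b ρ₀ jx jy : ℝ) :
    (1 - (Tabb + Ub)) *ᵥ equilibriumDistribution l a b ρ₀ jx jy =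
      ![0, 0, (4 - a - 2*b)*ρ₀/18, 0, 0, (4 + 2*a + b)*ρ₀/18, (4 + 2*a + b)*ρ₀/18, 0, 0] := by
  ext i
  fin_cases i <;>
    simp [Tabb, Ub, equilibriumDistribution, mulVec, dotProduct, Fin.sum_univ_succ, one_apply] <;>
    ring

theorem Kfl_order_zero_solution (l a b se sx sq sd ρ₀ jx jy : ℝ) (hl : l ≠ 0) :
    (Kfl l a b se sx sq sd).mulVec
        (![ρ₀, jx, jy, a*l^2*ρ₀, 0, 0, -l^2*jx, -l^2*jy, b*l^4*ρ₀])
      = (Md l).mulVec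
        (![0, 0, (4 - a - 2*b)*ρ₀/18, 0, 0, (4 + 2*a + b)*ρ₀/18, (4 + 2*a + b)*ρ₀/18, 0, 0]) := by
  rw [Kfl, ← one_sub_Tabb_add_Ub_mulVec_equilibriumDistribution l a b ρ₀ jx jy]
  exact one_sub_conj_mul_mulVec (isUnit_det_Md hl)
    (Cfl_mulVec_equilibriumMoments l a b se sx sq sd ρ₀ jx jy)
    (Md_mulVec_equilibriumDistribution hl a b ρ₀ jx jy)
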